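/- For 3 < k ≤ n, one has the exact identity (Δ_{k−1} ⊗ 1)(Δ_2(P)) + (1 ⊗ Δ_{k−1})(Δ_2(P)) = Σ_{0<i_1<⋯<i_{k−1}<n} ( v_1 ⊗ e_{i_1} ⊗ ⋯ ⊗ e_{i_{k−1}} + e_{i_1} ⊗ ⋯ ⊗ e_{i_{k−1}} ⊗ v_n ) in C^{⊗k}; i.e. the composition Δ_{k−1}Δ_2 applied to P produces exactly all minimally extreme terms (those beginning with v_1) and all maximally extreme terms (those ending with v_n). -/

import Mathlib

noncomputable section

/-- Cells of an `n`-gon: `v i` models the vertex `v_{i+1}`, `e i` models the edge `e_{i+1}`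
(so indices are 0-based), and `F` models the 2-cell `P`. -/
inductive Cell (n : ℕ) : Type where
  | v : Fin n → Cell n
  | e : Fin n → Cell n
  | F : Cell n
deriving DecidableEq

/-- `Tens R n k` models `C^{⊗ k}`, the free `R`-module on `k`-tuples of cells. -/
abbrev Tens (R : Type) [CommRing R] (n k : ℕ) : Type := (Fin k → Cell n) →₀ R

/-- The basis tensor corresponding to a tuple of cells. -/
def bt (R : Type) [CommRing R] {n k : ℕ} (x : Fin k → Cell n) : Tens R n k :=
  Finsupp.single x 1

/-- Degree of a cell. -/
def degC {n : ℕ} : Cell n → ℕ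
  | .v _ => 0
  | .e _ => 1
  | .F => 2

/-- `(-1)^m` in `R`. -/
def sgn (R : Type) [CommRing R] (m : ℤ) : R := if Even m then 1 else -1

/-- The boundary operator on basis cells: `∂(v_i) = 0`, `∂(e_i) = v_{i+1} - v_i` for `i < n`,
`∂(e_n) = v_n - v_1`, `∂(P) = e_1 + ⋯ + e_{n-1} - e_n`. -/
def dB (R : Type) [CommRing R] (n : ℕ) : Cell n → Tens R n 1
  | .v _ => 0
  | .e i =>
      if h : (i : ℕ) + 1 < n then
        bt R (fun _ => Cell.v ⟨(i : ℕ) + 1, h⟩) - bt R (fun _ => Cell.v i)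
      else
        bt R (fun _ => Cell.v i) - bt R (fun _ => Cell.v ⟨0, i.pos⟩)
  | .F => ∑ i : Fin n, (if (i : ℕ) + 1 < n then (1 : R) else -1) • bt R (fun _ => Cell.e i)

/-- `Σ_{0<i_1<⋯<i_k<n} e_{i_1} ⊗ ⋯ ⊗ e_{i_k}` (with 0-based indices: strictly increasing
tuples of edge indices all `< n-1`). -/
def esum (R : Type) [CommRing R] (n k : ℕ) : Tens R n k :=
  ∑ f : Fin k → Fin n,
    if (∀ p q : Fin k, p < q → f p < f q) ∧ (∀ p : Fin k, ((f p) : ℕ) + 1 < n) then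
      bt R (fun p => Cell.e (f p))
    else 0

/-- The `A_∞`-coalgebra operations on basis cells: `DeltaB R n 2` is the Kravatz diagonal
`Δ₂` and for `k ≥ 3`, `DeltaB R n k` is `Δ_k`, which vanishes on vertices and edges and sends
`P` to `Σ_{0<i_1<⋯<i_k<n} e_{i_1} ⊗ ⋯ ⊗ e_{i_k}`. -/
def DeltaB (R : Type) [CommRing R] (n : ℕ) (k : ℕ) : Cell n → Tens R n k
  | .v i => if k = 2 then bt R (fun _ => Cell.v i) else 0
  | .e i =>
      if k = 2 then
        if h : (i : ℕ) + 1 < n then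
          bt R (fun p => if (p : ℕ) = 0 then Cell.v i else Cell.e i) +
            bt R (fun p => if (p : ℕ) = 0 then Cell.e i else Cell.v ⟨(i : ℕ) + 1, h⟩)
        else
          bt R (fun p => if (p : ℕ) = 0 then Cell.v ⟨0, i.pos⟩ else Cell.e i) +
            bt R (fun p => if (p : ℕ) = 0 then Cell.e i else Cell.v i)
      else 0
  | .F =>
      esum R n k +
        (if h : k = 2 ∧ 0 < n then
          bt R (fun p => if (p : ℕ) = 0 then Cell.v ⟨0, h.2⟩ else Cell.F) +
            bt R (fun p => if (p : ℕ) = 0 then Cell.F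
                  else Cell.v ⟨n - 1, Nat.sub_lt h.2 Nat.one_pos⟩)
        else 0)

/-- Extension of a map defined on basis tensors to a linear map. -/
def lext (R : Type) [CommRing R] (n : ℕ) {k m : ℕ} (φ : (Fin k → Cell n) → Tens R n m) :
    Tens R n k →ₗ[R] Tens R n m :=
  Finsupp.linearCombination R φ

/-- Splicing a `j`-tuple into a `k`-tuple at position `a`, producing an `m`-tuple
(meaningful when `m = k + j - 1` and `a < k`). -/
def splice {n k j : ℕ} (m a : ℕ) (x : Fin k → Cell n) (y : Fin j → Cell n) :
    Fin m → Cell n := fun q =>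
  if h1 : (q : ℕ) < a ∧ (q : ℕ) < k then x ⟨q, h1.2⟩
  else if h2 : a ≤ (q : ℕ) ∧ (q : ℕ) - a < j then y ⟨(q : ℕ) - a, h2.2⟩
  else if h3 : (q : ℕ) + 1 - j < k then x ⟨(q : ℕ) + 1 - j, h3⟩
  else Cell.F

/-- `opp R n k m j a p g` is the linear map `1^{⊗a} ⊗ g ⊗ 1^{⊗(k-1-a)} : C^{⊗k} → C^{⊗m}`
(meaningful when `m = k + j - 1`), where `g` is the basis-level description of an operation
`C → C^{⊗j}` of degree `p`, evaluated with the Koszul sign convention. -/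
def opp (R : Type) [CommRing R] (n : ℕ) (k m j a : ℕ) (p : ℤ) (g : Cell n → Tens R n j) :
    Tens R n k →ₗ[R] Tens R n m :=
  lext R n fun x =>
    if ha : a < k then
      sgn R (p * ∑ q : Fin k, if (q : ℕ) < a then (degC (x q) : ℤ) else 0) •
        Finsupp.mapDomain (splice m a x) (g (x ⟨a, ha⟩))
    else 0

/-- `Δ_k` as a linear map `C → C^{⊗k}`. -/
def Dmap (R : Type) [CommRing R] (n k : ℕ) : Tens R n 1 →ₗ[R] Tens R n k :=
  lext R n fun x => DeltaB R n k (x 0)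

/-- The boundary `∂` as a linear map `C → C`. -/
def bdry (R : Type) [CommRing R] (n : ℕ) : Tens R n 1 →ₗ[R] Tens R n 1 :=
  lext R n fun x => dB R n (x 0)

/-- The top cell `P` as a chain. -/
def cellP (R : Type) [CommRing R] (n : ℕ) : Tens R n 1 := bt R (fun _ => Cell.F)

end

/-!
Write `Δ₂(P) = Σ eᵢ ⊗ eⱼ + v₁ ⊗ P + P ⊗ vₙ`. Since `k - 1 ≠ 2`, the operation `Δ_{k-1}` vanishes
on vertices and edges and sends `P` to `Σ e_{i₁} ⊗ ⋯ ⊗ e_{i_{k-1}}`; so applied in either slot it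
only survives on the factor `P`, which yields `v₁ ⊗ Σ e ⊗ ⋯ ⊗ e` and `(Σ e ⊗ ⋯ ⊗ e) ⊗ vₙ`.
The Koszul sign is trivial because only the vertex `v₁`, of degree `0`, ever stands to the left
of the slot acted on.
-/

section

variable {R : Type} [CommRing R] {n : ℕ}

section Splice

variable {k j : ℕ} {m : ℕ} (a : ℕ) (x : Fin k → Cell n) (y : Fin j → Cell n) (q : Fin m)

lemma splice_apply_of_lt (hqa : (q : ℕ) < a) (hqk : (q : ℕ) < k) :
    splice m a x y q = x ⟨q, hqk⟩ :=
  dif_pos ⟨hqa, hqk⟩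

lemma splice_apply_of_le_of_lt (haq : a ≤ q) (hqj : (q : ℕ) - a < j) :
    splice m a x y q = y ⟨q - a, hqj⟩ := by
  rw [splice, dif_neg (by omega), dif_pos ⟨haq, hqj⟩]

lemma splice_apply_of_add_le (hq : a + j ≤ q) (hqk : (q : ℕ) + 1 - j < k) :
    splice m a x y q = x ⟨q + 1 - j, hqk⟩ := by
  rw [splice, dif_neg (by omega), dif_neg (by omega), dif_pos hqk]

lemma splice_one_of_pair (x : Fin 2 → Cell n) (hm : m = j + 1) :
    splice m 1 x y = fun q : Fin m => if hq : (q : ℕ) = 0 then x 0 else y ⟨q - 1, by omega⟩ := by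
  funext q
  by_cases hq : (q : ℕ) = 0
  · rw [dif_pos hq, splice_apply_of_lt 1 x y q (by omega) (by omega)]
    exact congrArg x (Fin.ext hq)
  · rw [dif_neg hq, splice_apply_of_le_of_lt 1 x y q (by omega)]

lemma splice_zero_of_pair (x : Fin 2 → Cell n) (hm : m = j + 1) :
    splice m 0 x y = fun q : Fin m => if hq : (q : ℕ) < j then y ⟨q, hq⟩ else x 1 := by
  funext q
  by_cases hq : (q : ℕ) < j
  · rw [dif_pos hq, splice_apply_of_le_of_lt 0 x y q (Nat.zero_le _)]
    rfl
  · have := q.isLt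
    rw [dif_neg hq, splice_apply_of_add_le 0 x y q (by omega) (by omega)]
    exact congrArg x (Fin.ext (by simp; omega))

end Splice

section Operations

variable {k m j a : ℕ} (p : ℤ) (g : Cell n → Tens R n j)

lemma opp_bt (x : Fin k → Cell n) (ha : a < k) :
    opp R n k m j a p g (bt R x) =
      sgn R (p * ∑ q : Fin k, if (q : ℕ) < a then (degC (x q) : ℤ) else 0) •
        Finsupp.mapDomain (splice m a x) (g (x ⟨a, ha⟩)) := by
  simp [opp, lext, bt, Finsupp.linearCombination_single, ha]

lemma opp_bt_of_eq_zero (x : Fin k → Cell n) (ha : a < k) (hg : g (x ⟨a, ha⟩) = 0) :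
    opp R n k m j a p g (bt R x) = 0 := by
  rw [opp_bt p g x ha, hg, Finsupp.mapDomain_zero, smul_zero]

lemma opp_bt_of_degC_eq_zero (x : Fin k → Cell n) (ha : a < k)
    (hx : ∀ q : Fin k, (q : ℕ) < a → degC (x q) = 0) :
    opp R n k m j a p g (bt R x) = Finsupp.mapDomain (splice m a x) (g (x ⟨a, ha⟩)) := by
  have hdeg : ∑ q : Fin k, (if (q : ℕ) < a then (degC (x q) : ℤ) else 0) = 0 :=
    Finset.sum_eq_zero fun q _ => by split_ifs with hq <;> simp [hq, hx q]
  rw [opp_bt p g x ha, hdeg, mul_zero, sgn, if_pos Even.zero, one_smul]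

end Operations

lemma DeltaB_of_ne_two_of_ne_F {k : ℕ} (hk : k ≠ 2) {c : Cell n} (hc : c ≠ .F) :
    DeltaB R n k c = 0 := by
  cases c with
  | v i => exact if_neg hk
  | e i => exact if_neg hk
  | F => exact absurd rfl hc

lemma DeltaB_F_of_ne_two {k : ℕ} (hk : k ≠ 2) : DeltaB R n k .F = esum R n k := by
  simp [DeltaB, hk]

lemma DeltaB_two_F (hn : 0 < n) :
    DeltaB R n 2 .F = esum R n 2 +
      (bt R (fun p : Fin 2 => if (p : ℕ) = 0 then Cell.v ⟨0, hn⟩ else Cell.F) +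
        bt R (fun p : Fin 2 => if (p : ℕ) = 0 then Cell.F else Cell.v ⟨n - 1, by omega⟩)) := by
  simp [DeltaB, hn]

lemma mapDomain_esum {k m : ℕ} (φ : (Fin k → Cell n) → Fin m → Cell n) :
    Finsupp.mapDomain φ (esum R n k) =
      ∑ f : Fin k → Fin n,
        if (∀ p q : Fin k, p < q → f p < f q) ∧ (∀ p : Fin k, ((f p) : ℕ) + 1 < n) then
          bt R (φ fun p => Cell.e (f p))
        else 0 := by
  rw [esum, Finsupp.mapDomain_finsetSum]
  refine Finset.sum_congr rfl fun f _ => ?_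
  split_ifs
  · exact Finsupp.mapDomain_single
  · exact Finsupp.mapDomain_zero

lemma opp_esum_of_ne_two {k m j a : ℕ} (p : ℤ) (hj : j ≠ 2) (ha : a < k) :
    opp R n k m j a p (DeltaB R n j) (esum R n k) = 0 := by
  rw [esum, map_sum]
  refine Finset.sum_eq_zero fun f _ => ?_
  split_ifs
  · exact opp_bt_of_eq_zero p _ _ ha (DeltaB_of_ne_two_of_ne_F hj (by simp))
  · exact map_zero _

end

/-- For `3 < k ≤ n`:
`(Δ_{k-1}⊗1)(Δ₂(P)) + (1⊗Δ_{k-1})(Δ₂(P)) =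
  Σ_{0<i₁<⋯<i_{k-1}<n} (v₁ ⊗ e_{i₁} ⊗ ⋯ ⊗ e_{i_{k-1}} + e_{i₁} ⊗ ⋯ ⊗ e_{i_{k-1}} ⊗ v_n)`:
the composition `Δ_{k-1}Δ₂` applied to `P` produces exactly all minimally extreme and all
maximally extreme terms. -/
theorem Dk1_D2_extreme_terms (R : Type) [CommRing R] (n k : ℕ) (hn : 3 ≤ n)
    (hk : 3 < k) :
    (opp R n 2 k (k - 1) 0 ((k : ℤ) - 3) (DeltaB R n (k - 1))) (DeltaB R n 2 Cell.F) +
        (opp R n 2 k (k - 1) 1 ((k : ℤ) - 3) (DeltaB R n (k - 1))) (DeltaB R n 2 Cell.F) =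
      ∑ f : Fin (k - 1) → Fin n,
        if (∀ p q : Fin (k - 1), p < q → f p < f q) ∧
            (∀ p : Fin (k - 1), ((f p) : ℕ) + 1 < n) then
          bt R (fun q : Fin k =>
            if hq : (q : ℕ) = 0 then Cell.v ⟨0, by omega⟩
            else Cell.e (f ⟨(q : ℕ) - 1, by have := q.isLt; omega⟩)) +
          bt R (fun q : Fin k =>
            if hq : (q : ℕ) < k - 1 then Cell.e (f ⟨(q : ℕ), hq⟩)
            else Cell.v ⟨n - 1, by omega⟩)
        else 0 := by
  have hj : k - 1 ≠ 2 := by omega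
  have hm : k = k - 1 + 1 := by omega
  simp only [DeltaB_two_F (R := R) (by omega : 0 < n), map_add,
    opp_esum_of_ne_two _ hj Nat.zero_lt_two, opp_esum_of_ne_two _ hj Nat.one_lt_two]
  simp only [opp_bt_of_eq_zero, DeltaB_of_ne_two_of_ne_F hj, Nat.one_lt_two, Nat.zero_lt_two,
    ↓reduceIte, reduceCtorEq, ne_eq, not_false_eq_true, zero_add, add_zero]
  rw [opp_bt_of_degC_eq_zero _ _ _ Nat.zero_lt_two (by simp),
    opp_bt_of_degC_eq_zero _ _ _ Nat.one_lt_two ?vertex]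
  simp only [one_ne_zero, ↓reduceIte]
  rw [DeltaB_F_of_ne_two hj, mapDomain_esum, mapDomain_esum, ← Finset.sum_add_distrib]
  refine Finset.sum_congr rfl fun f _ => ?_
  split_ifs
  · rw [splice_zero_of_pair _ _ hm, splice_one_of_pair _ _ hm, add_comm]
    rfl
  · exact zero_add 0
  · intro q hq
    obtain rfl : q = 0 := Fin.ext (by omega)
    rfl
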